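/- arXiv:math/0703619 — 3 statements merged into one kernel-verified Lean document; each statement's English description precedes it below -/
import Mathlib

section
/- Let G be a group generated by elements f1, f2, f3, g1, g2, g3 subject to (at least) the relations: f2 = [g1^{-1}, g2^{-1}], f1 = [g1^{-1}, g3^{-1}], g1 = [f1^{-1}, g3], f3 = [g2^{-1}, g3^{-1}], g3 = [g2, f3^{-1}], and all the commuting relations [f1,g1]=[f1,f2]=[f1,g2]=[f1,f3]=[g1,f3]=[f2,g2]=[f2,f3]=[f2,g3]=[f3,g3]=1. If additionally g2 = 1 in G, then f1 = f2 = f3 = g1 = g2 = g3 = 1, i.e. G is trivial. -/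
open scoped commutatorElement

theorem stmt1 (G : Type*) [Group G] (f1 f2 f3 g1 g2 g3 : G)
    (hgen : Subgroup.closure {f1, f2, f3, g1, g2, g3} = (⊤ : Subgroup G))
    (r1 : f2 = ⁅g1⁻¹, g2⁻¹⁆) (r2 : f1 = ⁅g1⁻¹, g3⁻¹⁆)
    (r3 : g1 = ⁅f1⁻¹, g3⁆) (r4 : f3 = ⁅g2⁻¹, g3⁻¹⁆)
    (r5 : g3 = ⁅g2, f3⁻¹⁆)
    (c1 : ⁅f1, g1⁆ = 1) (c2 : ⁅f1, f2⁆ = 1) (c3 : ⁅f1, g2⁆ = 1)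
    (c4 : ⁅f1, f3⁆ = 1) (c5 : ⁅g1, f3⁆ = 1) (c6 : ⁅f2, g2⁆ = 1)
    (c7 : ⁅f2, f3⁆ = 1) (c8 : ⁅f2, g3⁆ = 1) (c9 : ⁅f3, g3⁆ = 1)
    (hg2 : g2 = 1) :
    f1 = 1 ∧ f2 = 1 ∧ f3 = 1 ∧ g1 = 1 ∧ g2 = 1 ∧ g3 = 1 ∧ ∀ x : G, x = 1 := by
  subst hg2
  have hg3 : g3 = 1 := by simp [r5, commutatorElement_def]
  subst hg3
  have hf3 : f3 = 1 := by simp [r4, commutatorElement_def]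
  have hf1 : f1 = 1 := by simp [r2, commutatorElement_def]
  have hg1 : g1 = 1 := by simp [r3, hf1, commutatorElement_def]
  have hf2 : f2 = 1 := by simp [r1, commutatorElement_def]
  refine ⟨hf1, hf2, hf3, hg1, rfl, rfl, fun x => ?_⟩
  have : Subgroup.closure ({1} : Set G) = ⊤ := by
    rw [← hgen]; congr 1
    simp [hf1, hf2, hf3, hg1]
  have hx : x ∈ Subgroup.closure ({1} : Set G) := this ▸ Subgroup.mem_top x
  rw [Subgroup.closure_singleton_one] at hx; simpa using hx
end

section
/- In any group G, if elements f1, f2, f3, g1, g2, g3 satisfy g1 = [f1^{-1}, g3], g3 = [g2, f3^{-1}], [f1, f3] = 1, [f1, g2] = 1, and f2 = [g1^{-1}, g2^{-1}], then g1 = 1 and f2 = 1. -/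
open scoped commutatorElement

theorem stmt2 (G : Type*) [Group G] (f1 f2 f3 g1 g2 g3 : G)
    (h1 : g1 = ⁅f1⁻¹, g3⁆) (h2 : g3 = ⁅g2, f3⁻¹⁆)
    (h3 : ⁅f1, f3⁆ = 1) (h4 : ⁅f1, g2⁆ = 1)
    (h5 : f2 = ⁅g1⁻¹, g2⁻¹⁆) :
    g1 = 1 ∧ f2 = 1 := by
  have c3 : Commute f1 f3 := commutatorElement_eq_one_iff_commute.mp h3
  have c4 : Commute f1 g2 := commutatorElement_eq_one_iff_commute.mp h4
  have cg3 : Commute f1 g3 := by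
    rw [h2]
    unfold commutatorElement
    exact ((c4.mul_right c3.inv_right).mul_right c4.inv_right).mul_right c3.inv_right.inv_right
  have hg1 : g1 = 1 := by
    rw [h1, commutatorElement_eq_one_iff_commute]
    exact cg3.inv_left
  refine ⟨hg1, ?_⟩
  rw [h5, hg1]
  simp
end

section
/- Let G be a group with elements a1, b1, a2, b2, c1, d1, c2, d2 satisfying: a1 = [b1^{-1}, d1^{-1}], b1 = [a1^{-1}, d1], a2 = [b2^{-1}, d2^{-1}], b2 = [a2^{-1}, d2], c1 = [d1^{-1}, b2^{-1}], d1 = [c1^{-1}, b2], c2 = [d2^{-1}, b1^{-1}], d2 = [c2^{-1}, b1], together with [a1,c1]=[a1,c2]=[a1,d2]=[b1,c1]=[a2,c1]=[a2,c2]=[a2,d1]=[b2,c2]=1. If additionally a1 = 1 and d2 = 1, then all eight elements a1, b1, a2, b2, c1, d1, c2, d2 equal 1. -/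
open scoped commutatorElement

theorem stmt3 (G : Type*) [Group G] (a1 b1 a2 b2 c1 d1 c2 d2 : G)
    (r1 : a1 = ⁅b1⁻¹, d1⁻¹⁆) (r2 : b1 = ⁅a1⁻¹, d1⁆)
    (r3 : a2 = ⁅b2⁻¹, d2⁻¹⁆) (r4 : b2 = ⁅a2⁻¹, d2⁆)
    (r5 : c1 = ⁅d1⁻¹, b2⁻¹⁆) (r6 : d1 = ⁅c1⁻¹, b2⁆)
    (r7 : c2 = ⁅d2⁻¹, b1⁻¹⁆) (r8 : d2 = ⁅c2⁻¹, b1⁆)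
    (c01 : ⁅a1, c1⁆ = 1) (c02 : ⁅a1, c2⁆ = 1) (c03 : ⁅a1, d2⁆ = 1)
    (c04 : ⁅b1, c1⁆ = 1) (c05 : ⁅a2, c1⁆ = 1) (c06 : ⁅a2, c2⁆ = 1)
    (c07 : ⁅a2, d1⁆ = 1) (c08 : ⁅b2, c2⁆ = 1)
    (ha1 : a1 = 1) (hd2 : d2 = 1) :
    a1 = 1 ∧ b1 = 1 ∧ a2 = 1 ∧ b2 = 1 ∧ c1 = 1 ∧ d1 = 1 ∧ c2 = 1 ∧ d2 = 1 := by
  subst ha1 hd2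
  have hb1 : b1 = 1 := by simpa using r2
  have ha2 : a2 = 1 := by simpa using r3
  have hb2 : b2 = 1 := by rw [r4, ha2]; simp
  have hc2 : c2 = 1 := by simpa using r7
  have hc1 : c1 = 1 := by rw [r5, hb2]; simp
  have hd1 : d1 = 1 := by rw [r6, hc1, hb2]; simp
  exact ⟨rfl, hb1, ha2, hb2, hc1, hd1, hc2, rfl⟩
end
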